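/- Let f : α → α (A), g : β → β (B), h : γ → γ (X), and h' : δ → δ (Y) be connected FGs on finite nonempty types, with cycle lengths c_A, c_B, c_X, c_Y respectively, such that lcm(c_A, c_X) = c_B and c_Y = c_X. Let a be a periodic point of f, x of h, y of h', and b of g. Suppose: (i) the digraph of U(f,a) ⋆ U(h,x) is isomorphic to the digraph of U(g,b); and (ii) there exists k : ℕ such that, with a' = f^[k] a and b' = g^[k] b, the digraph of U(f,a') ⋆ U(h',y) is isomorphic to the digraph of U(g,b'). Then the FGs h and h' are isomorphic. -/

import Mathlib

namespace DDS

/-- A homomorphism of digraphs `(γ, E) → (δ, E')` is a map preserving edges. -/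
def IsHom {γ : Type*} {δ : Type*} (E : γ → γ → Prop) (E' : δ → δ → Prop) (τ : γ → δ) : Prop :=
  ∀ ⦃u v⦄, E u v → E' (τ u) (τ v)

/-- Two digraphs are isomorphic if there is an edge-preserving (in both directions) bijection. -/
def Isomorphic {γ : Type*} {δ : Type*} (E : γ → γ → Prop) (E' : δ → δ → Prop) : Prop :=
  ∃ e : γ ≃ δ, ∀ u v, E u v ↔ E' (e u) (e v)

/-- The number of digraph homomorphisms from `(γ, E)` to `(δ, E')`. -/
noncomputable def homCount (γ : Type*) (δ : Type*) (E : γ → γ → Prop) (E' : δ → δ → Prop) : ℕ :=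
  Nat.card {τ : γ → δ // IsHom E E' τ}

/-- An in-tree: a root and a parent map such that the root is a fixed point and every
vertex reaches the root by iterating the parent map. -/
structure InTree (V : Type*) where
  root : V
  parent : V → V
  parent_root : parent root = root
  reaches_root : ∀ v, ∃ k, parent^[k] v = root

namespace InTree

variable {V : Type*}

/-- Edges of an in-tree are directed towards the root. -/
def Edge (T : InTree V) (v w : V) : Prop := v ≠ T.root ∧ w = T.parent v

/-- The height of a vertex: the least `k` with `parent^[k] v = root`. -/
noncomputable def height (T : InTree V) (v : V) : ℕ := sInf {k | T.parent^[k] v = T.root}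

lemma height_spec (T : InTree V) (v : V) : T.parent^[T.height v] v = T.root :=
  Nat.sInf_mem (T.reaches_root v)

@[simp] lemma height_root (T : InTree V) : T.height T.root = 0 :=
  Nat.sInf_eq_zero.mpr (Or.inl (by simp))

lemma height_eq_zero_iff (T : InTree V) {v : V} : T.height v = 0 ↔ v = T.root := by
  constructor
  · intro h
    have hs := T.height_spec v
    rw [h] at hs
    simpa using hs
  · rintro rfl
    exact T.height_root

lemma height_parent (T : InTree V) {v : V} (hv : v ≠ T.root) :
    T.height v = T.height (T.parent v) + 1 := by
  have h1 : T.height v ≠ 0 := fun h => hv (T.height_eq_zero_iff.mp h)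
  obtain ⟨m, hm⟩ := Nat.exists_eq_succ_of_ne_zero h1
  have hsp : T.parent^[T.height v] v = T.root := T.height_spec v
  rw [hm, Function.iterate_succ_apply] at hsp
  have hle : T.height (T.parent v) ≤ m := Nat.sInf_le hsp
  have hge : T.height v ≤ T.height (T.parent v) + 1 := by
    apply Nat.sInf_le
    show T.parent^[T.height (T.parent v) + 1] v = T.root
    rw [Function.iterate_succ_apply]
    exact T.height_spec (T.parent v)
  omega

lemma height_parent_le (T : InTree V) (v : V) : T.height (T.parent v) ≤ T.height v := by
  by_cases hv : v = T.root
  · subst hv; rw [T.parent_root]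
  · rw [T.height_parent hv]; omega

/-- The height of a finite in-tree: the maximum height of a vertex. -/
noncomputable def treeHeight [Fintype V] (T : InTree V) : ℕ := Finset.univ.sup T.height

section Star

variable {V₁ V₂ : Type*} (T₁ : InTree V₁) (T₂ : InTree V₂)

/-- Vertices of the `⋆` product: pairs of vertices of equal height. -/
def StarVertex := {x : V₁ × V₂ // T₁.height x.1 = T₂.height x.2}

lemma star_parent_mem (x : V₁ × V₂) (hx : T₁.height x.1 = T₂.height x.2) :
    T₁.height (T₁.parent x.1) = T₂.height (T₂.parent x.2) := by
  by_cases h : x.1 = T₁.root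
  · have h2 : x.2 = T₂.root := by
      apply T₂.height_eq_zero_iff.mp
      rw [← hx, h, T₁.height_root]
    rw [h, h2, T₁.parent_root, T₂.parent_root, T₁.height_root, T₂.height_root]
  · have h2 : x.2 ≠ T₂.root := by
      intro hc
      apply h
      apply T₁.height_eq_zero_iff.mp
      rw [hx, hc, T₂.height_root]
    have e1 := T₁.height_parent h
    have e2 := T₂.height_parent h2
    omega

/-- The parent map of the `⋆` product. -/
def starParent (x : StarVertex T₁ T₂) : StarVertex T₁ T₂ :=
  ⟨(T₁.parent x.1.1, T₂.parent x.1.2), star_parent_mem T₁ T₂ x.1 x.2⟩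

lemma starParent_iterate (k : ℕ) (x : StarVertex T₁ T₂) :
    ((starParent T₁ T₂)^[k] x).1 = (T₁.parent^[k] x.1.1, T₂.parent^[k] x.1.2) := by
  induction k generalizing x with
  | zero => simp
  | succ k ih =>
      rw [Function.iterate_succ_apply, Function.iterate_succ_apply,
        Function.iterate_succ_apply, ih]
      rfl

/-- The `⋆` product of two in-trees. -/
def star : InTree (StarVertex T₁ T₂) where
  root := ⟨(T₁.root, T₂.root), by simp⟩
  parent := starParent T₁ T₂
  parent_root := by
    apply Subtype.ext
    show (T₁.parent T₁.root, T₂.parent T₂.root) = (T₁.root, T₂.root)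
    rw [T₁.parent_root, T₂.parent_root]
  reaches_root := by
    intro x
    refine ⟨T₁.height x.1.1, Subtype.ext ?_⟩
    rw [starParent_iterate]
    have h1 : T₁.parent^[T₁.height x.1.1] x.1.1 = T₁.root := T₁.height_spec _
    have h2 : T₂.parent^[T₁.height x.1.1] x.1.2 = T₂.root := by
      rw [x.2]; exact T₂.height_spec _
    show (_, _) = (T₁.root, T₂.root)
    rw [h1, h2]

end Star

section Cut

variable (T : InTree V) (t : ℕ)

/-- Vertices of the cut at level `t`: vertices of height at most `t`. -/
def CutVertex := {v : V // T.height v ≤ t}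

/-- The parent map of the cut. -/
def cutParent (x : CutVertex T t) : CutVertex T t :=
  ⟨T.parent x.1, le_trans (T.height_parent_le x.1) x.2⟩

lemma cutParent_iterate (k : ℕ) (x : CutVertex T t) :
    ((cutParent T t)^[k] x).1 = T.parent^[k] x.1 := by
  induction k generalizing x with
  | zero => simp
  | succ k ih =>
      rw [Function.iterate_succ_apply, Function.iterate_succ_apply, ih]
      rfl

/-- The cut of an in-tree at level `t`: the sub-in-tree induced on vertices of height `≤ t`. -/
def cut : InTree (CutVertex T t) where
  root := ⟨T.root, by simp⟩
  parent := cutParent T t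
  parent_root := Subtype.ext T.parent_root
  reaches_root := fun x =>
    ⟨T.height x.1, Subtype.ext (by rw [cutParent_iterate]; exact T.height_spec x.1)⟩

end Cut

end InTree

section Unroll

variable {α : Type*} (f : α → α) (v : α)

/-- Vertices of the unroll of the functional graph of `f` from `v`. -/
def UnrollVertex := {ui : α × ℕ // f^[ui.2] ui.1 = v}

/-- The parent map of the unroll: `(u, i+1) ↦ (f u, i)`, fixing the root `(v, 0)`. -/
def unrollParent : UnrollVertex f v → UnrollVertex f v
  | ⟨(u, 0), h⟩ => ⟨(u, 0), h⟩
  | ⟨(u, i+1), h⟩ => ⟨(f u, i), by rw [← Function.iterate_succ_apply]; exact h⟩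

lemma unrollParent_iterate :
    ∀ (i : ℕ) (u : α) (h : f^[i] u = v),
      (unrollParent f v)^[i] ⟨(u, i), h⟩ = ⟨(v, 0), rfl⟩ := by
  intro i
  induction i with
  | zero =>
      intro u h
      have hu : u = v := by simpa using h
      subst hu
      rfl
  | succ i ih =>
      intro u h
      show (unrollParent f v)^[i] ⟨(f u, i), _⟩ = _
      exact ih (f u) _

/-- The unroll of the functional graph of `f : α → α` from the point `v`. -/
def unroll : InTree (UnrollVertex f v) where
  root := ⟨(v, 0), rfl⟩
  parent := unrollParent f v
  parent_root := rfl
  reaches_root := fun x => ⟨x.1.2, by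
    obtain ⟨⟨u, i⟩, h⟩ := x
    exact unrollParent_iterate f v i u h⟩

end Unroll

section FG

/-- The number of periodic points of `f`. -/
noncomputable def periodicCount {α : Type*} (f : α → α) : ℕ :=
  Nat.card {x : α // ∃ n, 1 ≤ n ∧ f^[n] x = x}

/-- A functional graph is connected if the equivalence relation generated by
`x ∼ f x` relates all pairs of points. -/
def FGConnected {α : Type*} (f : α → α) : Prop :=
  ∀ x y : α, Relation.EqvGen (fun u w => f u = w) x y

/-- Isomorphism of functional graphs. -/
def FGIso {α β : Type*} (f : α → α) (g : β → β) : Prop :=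
  ∃ e : α ≃ β, ∀ x, e (f x) = g (e x)

/-- The product of two functional graphs. -/
def prodMap {α γ : Type*} (f : α → α) (h : γ → γ) : α × γ → α × γ :=
  fun z => (f z.1, h z.2)

/-- `FGContains f h g` means the functional graph of `g` is (isomorphic to) a union of
connected components of the product `f × h`. -/
def FGContains {α γ β : Type*} (f : α → α) (h : γ → γ) (g : β → β) : Prop :=
  ∃ e : β → α × γ, Function.Injective e ∧ e ∘ g = prodMap f h ∘ e ∧
    ∀ z, prodMap f h z ∈ Set.range e → z ∈ Set.range e

end FG

end DDS

open DDS DDS.InTree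

/-!
Shifting the second isomorphism `k` levels up gives `U(f, a) ⋆ U(h', y₀) ≅ U(g, b)` for the
periodic point `y₀` with `h'^[k] y₀ = y`: the unroll from `b` is the subtree of the unroll from
`g^[k] b` hanging from the vertex `(b, k)`, and the isomorphism must send `((a, k), (y₀, k))` to
`(b, k)`, because `(b, k)` is the only vertex of height `k` with descendants at every depth.

Cut at a finite depth `t`, the trees become finite levelled forests and `⋆` becomes their levelled
product. The cut of `U(f, a)` contains a path of full depth, so Lovász's counting argument cancels
it: the numbers of homomorphisms from any forest into the cuts of `U(h, x)` and `U(h', y₀)` agree,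
hence so do the numbers of injective ones, hence the two cuts are isomorphic.

Finally `h` is rolled back up from its unroll. A point `w` appears in `U(h, x)` at the heights
`i` with `h^[i] w = x`, exactly once in the band `preperiod w < i ≤ preperiod w + c`, where `c`
is the cycle length. In a deep cut, `w` is periodic iff its vertex has descendants `|γ|` levels
further up, so an isomorphism of cuts preserves preperiods and, the cycle lengths being equal,
maps the band onto the band. It commutes with `h` because the parent of the band vertex of `w` is
the band vertex of `h w`, except at the bottom of the band, where `h w = x` and both sides lie
over `y`.
-/

namespace DDS

open Function Set

universe u v w

section Periodic

variable {α : Type*} {f : α → α}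

theorem eq_of_iterate_eq_of_mem_periodicPts {p q : α} (hp : p ∈ periodicPts f)
    (hq : q ∈ periodicPts f) {n : ℕ} (h : f^[n] p = f^[n] q) : p = q :=
  ((bijOn_periodicPts (f := f)).iterate n).injOn hp hq h

theorem iterate_mem_periodicPts {p : α} (hp : p ∈ periodicPts f) (n : ℕ) :
    f^[n] p ∈ periodicPts f :=
  ((bijOn_periodicPts (f := f)).iterate n).mapsTo hp

theorem mem_range_iterate_of_mem_periodicPts {p : α} (hp : p ∈ periodicPts f) (n : ℕ) :
    p ∈ range f^[n] :=
  let ⟨q, _, hq⟩ := ((bijOn_periodicPts (f := f)).iterate n).surjOn hp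
  ⟨q, hq⟩

theorem mem_periodicPts_of_mem_range_iterate [Finite α] {n : ℕ} (hn : Nat.card α ≤ n)
    {p : α} (hp : p ∈ range f^[n]) : p ∈ periodicPts f := by
  obtain ⟨z, rfl⟩ := hp
  have hninj : ¬Injective fun i : Fin (n + 1) => f^[i] z := fun hinj => by
    have := Nat.card_le_card_of_injective _ hinj
    simp only [Nat.card_eq_fintype_card, Fintype.card_fin] at this
    omega
  obtain ⟨i, j, heq, hij⟩ : ∃ i j : Fin (n + 1), f^[i] z = f^[j] z ∧ i ≠ j := by
    simpa [Injective] using hninj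
  have key : ∀ i j : ℕ, i < j → j ≤ n → f^[i] z = f^[j] z → f^[n] z ∈ periodicPts f := by
    intro i j hij hjn heq
    have hi : f^[i] z ∈ periodicPts f := by
      refine mk_mem_periodicPts (n := j - i) (by omega) ?_
      rw [IsPeriodicPt, IsFixedPt, ← iterate_add_apply, Nat.sub_add_cancel hij.le, heq]
    simpa [← iterate_add_apply, Nat.sub_add_cancel (hij.le.trans hjn)] using
      iterate_mem_periodicPts hi (n - i)
  rcases lt_or_gt_of_ne (Fin.val_ne_of_ne hij) with h | h
  · exact key i j h (Nat.lt_succ_iff.mp j.2) heq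
  · exact key j i h (Nat.lt_succ_iff.mp i.2) heq.symm

theorem mem_periodicPts_iff_mem_range_iterate [Finite α] {n : ℕ} (hn : Nat.card α ≤ n) {p : α} :
    p ∈ periodicPts f ↔ p ∈ range f^[n] :=
  ⟨fun hp => mem_range_iterate_of_mem_periodicPts hp n, mem_periodicPts_of_mem_range_iterate hn⟩

theorem minimalPeriod_dvd_sub {x w : α} {i j : ℕ} (hi : f^[i] w = x) (hj : f^[j] w = x)
    (hij : i ≤ j) : minimalPeriod f x ∣ j - i := by
  refine IsPeriodicPt.minimalPeriod_dvd ?_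
  change f^[j - i] x = x
  conv_lhs => rw [← hi]
  rw [← iterate_add_apply, Nat.sub_add_cancel hij, hj]

theorem exists_iterate_eq_iterate_of_eqvGen {x y : α}
    (hxy : Relation.EqvGen (fun u w => f u = w) x y) : ∃ m n, f^[m] x = f^[n] y := by
  induction hxy with
  | rel u w huw => exact ⟨1, 0, huw⟩
  | refl u => exact ⟨0, 0, rfl⟩
  | symm u w _ ih =>
    obtain ⟨m, n, h⟩ := ih
    exact ⟨n, m, h.symm⟩
  | trans u w z _ _ ih₁ ih₂ =>
    obtain ⟨m₁, n₁, h₁⟩ := ih₁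
    obtain ⟨m₂, n₂, h₂⟩ := ih₂
    refine ⟨m₂ + m₁, n₁ + n₂, ?_⟩
    rw [iterate_add_apply, h₁, ← iterate_add_apply, add_comm, iterate_add_apply, h₂,
      ← iterate_add_apply]

theorem FGConnected.exists_iterate_eq (hf : FGConnected f) (q : α) {p : α}
    (hp : p ∈ periodicPts f) : ∃ n, f^[n] q = p := by
  obtain ⟨m, n, h⟩ := exists_iterate_eq_iterate_of_eqvGen (hf q p)
  have hle : n ≤ minimalPeriod f p * n :=
    Nat.le_mul_of_pos_left n (minimalPeriod_pos_of_mem_periodicPts hp)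
  refine ⟨minimalPeriod f p * n - n + m, ?_⟩
  rw [iterate_add_apply, h, ← iterate_add_apply, Nat.sub_add_cancel hle]
  exact ((isPeriodicPt_minimalPeriod f p).mul_const n).eq

theorem FGConnected.periodicCount_eq_minimalPeriod [Finite α] (hf : FGConnected f) {x : α}
    (hx : x ∈ periodicPts f) : periodicCount f = minimalPeriod f x := by
  change Nat.card (periodicPts f) = _
  rw [← Nat.card_fin (minimalPeriod f x)]
  refine (Nat.card_eq_of_bijective (fun i : Fin (minimalPeriod f x) =>
    (⟨f^[i] x, iterate_mem_periodicPts hx i⟩ : periodicPts f)) ⟨fun i j hij => ?_, ?_⟩).symm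
  · exact Fin.ext (iterate_injOn_Iio_minimalPeriod i.2 j.2 (congrArg Subtype.val hij))
  · rintro ⟨q, hq⟩
    obtain ⟨n, rfl⟩ := hf.exists_iterate_eq x hq
    exact ⟨⟨n % minimalPeriod f x, Nat.mod_lt _ (minimalPeriod_pos_of_mem_periodicPts hx)⟩,
      Subtype.ext iterate_mod_minimalPeriod_eq⟩

end Periodic

section Preperiod

variable {α β : Type*} [Finite α] [Finite β] {f : α → α} {g : β → β}

variable (f) in
noncomputable def preperiod (w : α) : ℕ := sInf {m | f^[m] w ∈ periodicPts f}

theorem iterate_mem_periodicPts_iff {w : α} {m : ℕ} :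
    f^[m] w ∈ periodicPts f ↔ preperiod f w ≤ m := by
  refine ⟨fun h => Nat.sInf_le h, fun h => ?_⟩
  have hne : {m | f^[m] w ∈ periodicPts f}.Nonempty :=
    ⟨Nat.card α, mem_periodicPts_of_mem_range_iterate le_rfl ⟨w, rfl⟩⟩
  have hp : f^[preperiod f w] w ∈ periodicPts f := Nat.sInf_mem hne
  have := iterate_mem_periodicPts hp (m - preperiod f w)
  rwa [← iterate_add_apply, Nat.sub_add_cancel h] at this

theorem preperiod_le_card (w : α) : preperiod f w ≤ Nat.card α :=
  iterate_mem_periodicPts_iff.mp (mem_periodicPts_of_mem_range_iterate le_rfl ⟨w, rfl⟩)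

theorem preperiod_apply (w : α) : preperiod f (f w) = preperiod f w - 1 := by
  refine eq_of_forall_ge_iff fun m => ?_
  rw [← iterate_mem_periodicPts_iff, ← iterate_succ_apply, iterate_mem_periodicPts_iff]
  omega

theorem preperiod_eq_of_iff {w : α} {w' : β} {i : ℕ} (hi : preperiod f w ≤ i)
    (h : ∀ m ≤ i, f^[m] w ∈ periodicPts f ↔ g^[m] w' ∈ periodicPts g) :
    preperiod f w = preperiod g w' := by
  have key : ∀ m ≤ i, preperiod f w ≤ m ↔ preperiod g w' ≤ m := fun m hm => by
    rw [← iterate_mem_periodicPts_iff, ← iterate_mem_periodicPts_iff, h m hm]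
  have hle := (key _ hi).1 le_rfl
  exact le_antisymm ((key _ (hle.trans hi)).2 le_rfl) hle

variable (f) in
/-- For connected `f`, the unique `i` with `f^[i] w = x` in the window
`(preperiod f w, preperiod f w + minimalPeriod f x]`. -/
noncomputable def bandIndex (x w : α) : ℕ := sInf {i | preperiod f w < i ∧ f^[i] w = x}

theorem bandIndex_spec (hf : FGConnected f) {x : α} (hx : x ∈ periodicPts f) (w : α) :
    preperiod f w < bandIndex f x w ∧ bandIndex f x w ≤ preperiod f w + minimalPeriod f x ∧
      f^[bandIndex f x w] w = x := by
  have hc := minimalPeriod_pos_of_mem_periodicPts hx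
  have hne : {i | preperiod f w < i ∧ f^[i] w = x}.Nonempty := by
    obtain ⟨n, hn⟩ := hf.exists_iterate_eq w hx
    refine ⟨minimalPeriod f x * (preperiod f w + 1) + n, ?_, ?_⟩
    · nlinarith
    · rw [iterate_add_apply, hn]
      exact ((isPeriodicPt_minimalPeriod f x).mul_const _).eq
  obtain ⟨hlt, hB⟩ : preperiod f w < bandIndex f x w ∧ f^[bandIndex f x w] w = x :=
    Nat.sInf_mem hne
  refine ⟨hlt, not_lt.mp fun hgt => ?_, hB⟩
  have hmem : bandIndex f x w - minimalPeriod f x ∈ {i | preperiod f w < i ∧ f^[i] w = x} := by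
    refine ⟨by omega, eq_of_iterate_eq_of_mem_periodicPts (n := minimalPeriod f x)
      (iterate_mem_periodicPts_iff.mpr (by omega)) hx ?_⟩
    rw [← iterate_add_apply, Nat.add_sub_cancel' (by omega), iterate_minimalPeriod]
    exact hB
  have : bandIndex f x w ≤ _ := Nat.sInf_le hmem
  omega

theorem eq_bandIndex_iff (hf : FGConnected f) {x : α} (hx : x ∈ periodicPts f) {w : α} {i : ℕ}
    (hi : f^[i] w = x) :
    i = bandIndex f x w ↔ preperiod f w < i ∧ i ≤ preperiod f w + minimalPeriod f x := by
  obtain ⟨hB₁, hB₂, hB⟩ := bandIndex_spec hf hx w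
  refine ⟨fun h => h ▸ ⟨hB₁, hB₂⟩, fun ⟨h₁, h₂⟩ => ?_⟩
  have hc := minimalPeriod_pos_of_mem_periodicPts hx
  rcases le_total i (bandIndex f x w) with hle | hle
  · have := Nat.eq_zero_of_dvd_of_lt (minimalPeriod_dvd_sub hi hB hle) (by omega)
    omega
  · have := Nat.eq_zero_of_dvd_of_lt (minimalPeriod_dvd_sub hB hi hle) (by omega)
    omega

end Preperiod

structure LevelledForest : Type (u + 1) where
  V : Type u
  [finite : Finite V]
  lev : V → ℕ
  par : V → V
  lev_par : ∀ s, lev s ≠ 0 → lev (par s) + 1 = lev s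
  par_eq_self : ∀ s, lev s = 0 → par s = s

attribute [instance] LevelledForest.finite

namespace LevelledForest

section Basic

variable {X : LevelledForest.{u}} {Y : LevelledForest.{v}} {Z : LevelledForest.{w}}

theorem lev_par_eq (s : X.V) : X.lev (X.par s) = X.lev s - 1 := by
  by_cases hs : X.lev s = 0
  · rw [X.par_eq_self s hs, hs]
  · have := X.lev_par s hs
    omega

theorem lev_par_iterate (n : ℕ) (s : X.V) : X.lev (X.par^[n] s) = X.lev s - n := by
  induction n with
  | zero => rfl
  | succ n ih => rw [iterate_succ_apply', lev_par_eq, ih, Nat.sub_sub]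

structure IsIso (X : LevelledForest.{u}) (Y : LevelledForest.{v}) (e : X.V ≃ Y.V) : Prop where
  lev_map : ∀ s, Y.lev (e s) = X.lev s
  map_par : Semiconj e X.par Y.par

theorem IsIso.symm {e : X.V ≃ Y.V} (he : IsIso X Y e) : IsIso Y X e.symm where
  lev_map s := by rw [← he.lev_map, e.apply_symm_apply]
  map_par s := e.injective (by rw [he.map_par, e.apply_symm_apply, e.apply_symm_apply])

theorem IsIso.trans {e : X.V ≃ Y.V} {e' : Y.V ≃ Z.V} (he : IsIso X Y e) (he' : IsIso Y Z e') :
    IsIso X Z (e.trans e') where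
  lev_map s := (he'.lev_map _).trans (he.lev_map s)
  map_par := he'.map_par.comp_left he.map_par

def ofEquiv (X : LevelledForest.{u}) {W : Type v} (e : X.V ≃ W) : LevelledForest.{v} where
  V := W
  finite := Finite.of_equiv _ e
  lev := X.lev ∘ e.symm
  par := e ∘ X.par ∘ e.symm
  lev_par s hs := by simpa using X.lev_par _ hs
  par_eq_self s hs := by simp [X.par_eq_self _ hs]

theorem isIso_ofEquiv {W : Type v} (e : X.V ≃ W) : IsIso X (X.ofEquiv e) e where
  lev_map s := congrArg X.lev (e.symm_apply_apply s)
  map_par s := congrArg (e ∘ X.par) (e.symm_apply_apply s).symm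

def prod (X : LevelledForest.{u}) (Y : LevelledForest.{v}) : LevelledForest.{max u v} where
  V := {p : X.V × Y.V // X.lev p.1 = Y.lev p.2}
  finite := Subtype.finite
  lev p := X.lev p.1.1
  par p := ⟨(X.par p.1.1, Y.par p.1.2), by rw [lev_par_eq, lev_par_eq, p.2]⟩
  lev_par p := X.lev_par p.1.1
  par_eq_self p hp := Subtype.ext (Prod.ext (X.par_eq_self _ hp) (Y.par_eq_self _ (p.2 ▸ hp)))

def HasDescendant (X : LevelledForest.{u}) (n : ℕ) (s : X.V) : Prop :=
  ∃ s', X.lev s' = X.lev s + n ∧ X.par^[n] s' = s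

theorem IsIso.hasDescendant {e : X.V ≃ Y.V} {n : ℕ} {s : X.V} (he : IsIso X Y e)
    (hs : X.HasDescendant n s) : Y.HasDescendant n (e s) :=
  let ⟨s', hlev, hpar⟩ := hs
  ⟨e s', by rw [he.lev_map, he.lev_map, hlev], by rw [← he.map_par.iterate_right, hpar]⟩

theorem IsIso.hasDescendant_iff {e : X.V ≃ Y.V} {n : ℕ} {s : X.V} (he : IsIso X Y e) :
    X.HasDescendant n s ↔ Y.HasDescendant n (e s) :=
  ⟨he.hasDescendant, fun hs => e.symm_apply_apply s ▸ he.symm.hasDescendant hs⟩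

end Basic

section Hom

variable (C : LevelledForest.{u}) (X : LevelledForest.{v})

def Hom : Type (max u v) :=
  {τ : C.V → X.V // (∀ s, X.lev (τ s) = C.lev s) ∧ Semiconj τ C.par X.par}

instance : Finite (C.Hom X) := Subtype.finite

def Emb : Type (max u v) := {τ : C.Hom X // Injective τ.1}

instance : Finite (C.Emb X) := Subtype.finite

variable {C X} {Y : LevelledForest.{w}}

def homProdEquiv : C.Hom (X.prod Y) ≃ C.Hom X × C.Hom Y where
  toFun τ :=
    (⟨fun s => (τ.1 s).1.1, τ.2.1, fun s => congrArg (·.1.1) (τ.2.2 s)⟩,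
     ⟨fun s => (τ.1 s).1.2, fun s => (τ.1 s).2.symm.trans (τ.2.1 s),
      fun s => congrArg (·.1.2) (τ.2.2 s)⟩)
  invFun p :=
    ⟨fun s => ⟨(p.1.1 s, p.2.1 s), (p.1.2.1 s).trans (p.2.2.1 s).symm⟩, p.1.2.1,
     fun s => Subtype.ext (Prod.ext (p.1.2.2 s) (p.2.2.2 s))⟩
  left_inv _ := rfl
  right_inv _ := rfl

theorem card_hom_prod :
    Nat.card (C.Hom (X.prod Y)) = Nat.card (C.Hom X) * Nat.card (C.Hom Y) := by
  rw [Nat.card_congr homProdEquiv, Nat.card_prod]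

def IsIso.toHom {e : X.V ≃ Y.V} (he : IsIso X Y e) : X.Hom Y := ⟨e, he.lev_map, he.map_par⟩

def IsIso.homEquiv {e : X.V ≃ Y.V} (he : IsIso X Y e) : C.Hom X ≃ C.Hom Y where
  toFun τ := ⟨e ∘ τ.1, fun s => (he.lev_map _).trans (τ.2.1 s), he.map_par.comp_left τ.2.2⟩
  invFun τ := ⟨e.symm ∘ τ.1, fun s => (he.symm.lev_map _).trans (τ.2.1 s),
    he.symm.map_par.comp_left τ.2.2⟩
  left_inv _ := Subtype.ext (funext fun _ => e.symm_apply_apply _)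
  right_inv _ := Subtype.ext (funext fun _ => e.apply_symm_apply _)

def IsIso.embEquiv {D : LevelledForest.{w}} {e : C.V ≃ D.V} (he : IsIso C D e) :
    C.Emb X ≃ D.Emb X where
  toFun τ := ⟨⟨τ.1.1 ∘ e.symm, fun s => (τ.1.2.1 _).trans (he.symm.lev_map s),
    τ.1.2.2.comp_left he.symm.map_par⟩, τ.2.comp e.symm.injective⟩
  invFun τ := ⟨⟨τ.1.1 ∘ e, fun s => (τ.1.2.1 _).trans (he.lev_map s),
    τ.1.2.2.comp_left he.map_par⟩, τ.2.comp e.injective⟩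
  left_inv _ := Subtype.ext (Subtype.ext (funext fun _ => by simp))
  right_inv _ := Subtype.ext (Subtype.ext (funext fun _ => by simp))

theorem nonempty_hom_of_lev_le {A : LevelledForest.{w}} {L : ℕ} {a : A.V} (ha : A.lev a = L)
    (hC : ∀ s, C.lev s ≤ L) : Nonempty (C.Hom A) := by
  refine ⟨⟨fun s => A.par^[L - C.lev s] a, fun s => ?_, fun s => ?_⟩⟩
  · have := hC s
    rw [lev_par_iterate, ha]
    omega
  · by_cases hs : C.lev s = 0
    · rw [C.par_eq_self s hs, A.par_eq_self]
      rw [lev_par_iterate, ha, hs, Nat.sub_zero, Nat.sub_self]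
    · have := hC s
      change A.par^[L - C.lev (C.par s)] a = A.par (A.par^[L - C.lev s] a)
      rw [lev_par_eq, ← iterate_succ_apply' A.par]
      congr 1
      omega

theorem card_hom_eq_zero {s : C.V} (hs : ∀ t, X.lev t < C.lev s) : Nat.card (C.Hom X) = 0 :=
  haveI : IsEmpty (C.Hom X) := ⟨fun τ => (hs (τ.1 s)).ne (τ.2.1 s)⟩
  Nat.card_of_isEmpty

end Hom

section Quotient

variable (C : LevelledForest.{u}) (X : LevelledForest.{v})

abbrev Congruence : Type u :=
  {r : Setoid C.V // (∀ a b, r a b → C.lev a = C.lev b) ∧ ∀ a b, r a b → r (C.par a) (C.par b)}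

instance : Finite C.Congruence :=
  haveI : Finite (Setoid C.V) := Finite.of_injective (fun r : Setoid C.V => ⇑r)
    fun _ _ h => Setoid.ext fun a b => iff_of_eq (congrFun (congrFun h a) b)
  Subtype.finite

noncomputable instance : Fintype C.Congruence := Fintype.ofFinite _

noncomputable instance : DecidableEq C.Congruence := Classical.decEq _

def quot (r : C.Congruence) : LevelledForest.{u} where
  V := Quotient r.1
  finite := Quotient.finite _
  lev := Quotient.lift C.lev r.2.1
  par := Quotient.map C.par r.2.2
  lev_par := by
    rintro ⟨a⟩
    exact C.lev_par a
  par_eq_self := by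
    rintro ⟨a⟩ h
    exact congrArg (Quotient.mk _) (C.par_eq_self a h)

def botCongruence : C.Congruence :=
  ⟨⊥, fun a b h => by rw [Setoid.bot_def] at h; rw [h],
    fun a b h => by rw [Setoid.bot_def] at h ⊢; rw [h]⟩

theorem isIso_quot_bot :
    IsIso C (C.quot C.botCongruence) (Equiv.ofBijective (Quotient.mk _)
      ⟨fun a b h => by
        have : (⊥ : Setoid C.V) a b := Quotient.exact h
        rwa [Setoid.bot_def] at this,
        Quotient.mk_surjective⟩) where
  lev_map _ := rfl
  map_par _ := rfl

theorem card_quot_lt {r : C.Congruence} (hr : r ≠ C.botCongruence) :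
    Nat.card (C.quot r).V < Nat.card C.V := by
  refine lt_of_not_ge fun hle => hr (Subtype.ext (Setoid.ext fun a b => ?_))
  have hinj := ((Quotient.mk_surjective (s := r.1)).bijective_of_nat_card_le hle).1
  change r.1 a b ↔ (⊥ : Setoid C.V) a b
  rw [Setoid.bot_def]
  exact ⟨fun h => hinj (Quotient.sound h), fun h => h ▸ r.1.refl a⟩

def factor (p : Σ r : C.Congruence, (C.quot r).Emb X) : C.Hom X :=
  ⟨p.2.1.1 ∘ Quotient.mk _, fun _ => p.2.1.2.1 _, fun s => p.2.1.2.2 (Quotient.mk _ s)⟩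

theorem factor_bijective : Bijective (factor C X) := by
  constructor
  · rintro ⟨r, ι⟩ ⟨r', ι'⟩ h
    have hw : ∀ s, ι.1.1 (Quotient.mk _ s) = ι'.1.1 (Quotient.mk _ s) :=
      fun s => congrFun (congrArg Subtype.val h) s
    have hker : ∀ (r : C.Congruence) (ι : (C.quot r).Emb X) (a b : C.V),
        r.1 a b ↔ ι.1.1 (Quotient.mk _ a) = ι.1.1 (Quotient.mk _ b) :=
      fun r ι a b => (ι.2.eq_iff.trans Quotient.eq).symm
    obtain rfl : r = r' :=
      Subtype.ext (Setoid.ext fun a b => by rw [hker r ι, hker r' ι', hw, hw])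
    apply congrArg (Sigma.mk r)
    exact Subtype.ext (Subtype.ext (funext (Quotient.ind hw)))
  · intro τ
    refine ⟨⟨⟨Setoid.ker τ.1, fun a b h => ?_, fun a b h => ?_⟩,
      ⟨⟨Quotient.lift τ.1 fun _ _ h => h, Quotient.ind τ.2.1, Quotient.ind τ.2.2⟩,
        Quotient.ind₂ fun _ _ h => Quotient.sound h⟩⟩, rfl⟩
    · rw [← τ.2.1 a, ← τ.2.1 b, Setoid.ker_def.mp h]
    · exact Setoid.ker_def.mpr (by rw [τ.2.2, τ.2.2, Setoid.ker_def.mp h])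

theorem card_hom_eq : Nat.card (C.Hom X) = Nat.card (C.Emb X) +
    ∑ r ∈ Finset.univ.erase C.botCongruence, Nat.card ((C.quot r).Emb X) := by
  rw [← Nat.card_eq_of_bijective _ (factor_bijective C X), Nat.card_sigma,
    ← Finset.add_sum_erase _ _ (Finset.mem_univ C.botCongruence),
    Nat.card_congr (C.isIso_quot_bot.embEquiv (X := X))]

end Quotient

section Cancellation

theorem card_emb_eq_of_card_hom_eq {X : LevelledForest.{v}} {Y : LevelledForest.{w}}
    (h : ∀ C : LevelledForest.{u}, Nat.card (C.Hom X) = Nat.card (C.Hom Y))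
    (C : LevelledForest.{u}) : Nat.card (C.Emb X) = Nat.card (C.Emb Y) := by
  induction hn : Nat.card C.V using Nat.strong_induction_on generalizing C with
  | _ n ih =>
    have hsum : ∑ r ∈ Finset.univ.erase C.botCongruence, Nat.card ((C.quot r).Emb X) =
        ∑ r ∈ Finset.univ.erase C.botCongruence, Nat.card ((C.quot r).Emb Y) :=
      Finset.sum_congr rfl fun r hr =>
        ih _ (hn ▸ C.card_quot_lt (Finset.ne_of_mem_erase hr)) _ rfl
    have := h C
    rw [card_hom_eq, card_hom_eq, hsum] at this
    omega

theorem nonempty_emb_of_card_emb_eq {X : LevelledForest.{v}} {Y : LevelledForest.{w}}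
    (h : ∀ C : LevelledForest.{0}, Nat.card (C.Emb X) = Nat.card (C.Emb Y)) :
    Nonempty (X.Emb Y) := by
  -- test with a copy of `X` in `Type`
  have he := isIso_ofEquiv (Finite.equivFin X.V)
  have : Nonempty ((X.ofEquiv (Finite.equivFin X.V)).Emb X) :=
    ⟨⟨he.symm.toHom, Equiv.injective _⟩⟩
  have hpos := h (X.ofEquiv (Finite.equivFin X.V)) ▸ Nat.card_pos
  exact ⟨he.embEquiv.symm (Nat.card_pos_iff.mp hpos).1.some⟩

theorem exists_isIso_of_card_hom_eq {X : LevelledForest.{v}} {Y : LevelledForest.{w}}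
    (h : ∀ C : LevelledForest.{0}, Nat.card (C.Hom X) = Nat.card (C.Hom Y)) :
    ∃ e : X.V ≃ Y.V, IsIso X Y e := by
  have hemb := card_emb_eq_of_card_hom_eq h
  obtain ⟨τ⟩ := nonempty_emb_of_card_emb_eq hemb
  obtain ⟨σ⟩ := nonempty_emb_of_card_emb_eq fun C => (hemb C).symm
  have hbij := τ.2.bijective_of_nat_card_le (Nat.card_le_card_of_injective _ σ.2)
  exact ⟨Equiv.ofBijective _ hbij, τ.1.2.1, τ.1.2.2⟩

theorem exists_isIso_of_isIso_prod {A : LevelledForest.{u}} {X : LevelledForest.{v}}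
    {Y : LevelledForest.{w}} {L : ℕ} {a : A.V} (ha : A.lev a = L) (hX : ∀ s, X.lev s ≤ L)
    (hY : ∀ s, Y.lev s ≤ L) {e : (A.prod X).V ≃ (A.prod Y).V} (he : IsIso _ _ e) :
    ∃ e' : X.V ≃ Y.V, IsIso X Y e' := by
  -- `hom(C, A × X) = hom(C, A) * hom(C, X)`, and `hom(C, A) ≠ 0` unless `C` is deeper than `L`,
  -- in which case `hom(C, X) = 0 = hom(C, Y)`
  refine exists_isIso_of_card_hom_eq fun C => ?_
  by_cases hC : ∀ s, C.lev s ≤ L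
  · have : Nonempty (C.Hom A) := nonempty_hom_of_lev_le ha hC
    refine Nat.eq_of_mul_eq_mul_left (Nat.card_pos (α := C.Hom A)) ?_
    rw [← card_hom_prod, ← card_hom_prod, Nat.card_congr he.homEquiv]
  · obtain ⟨s, hs⟩ := not_forall.mp hC
    rw [card_hom_eq_zero (s := s) fun t => (hX t).trans_lt (not_le.mp hs),
      card_hom_eq_zero (s := s) fun t => (hY t).trans_lt (not_le.mp hs)]

end Cancellation

end LevelledForest

section VertexAPI

/- `StarVertex`, `UnrollVertex` and `CutVertex` are subtypes behind semireducible definitions, so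
`rw` and `simp` cannot see through `Subtype` lemmas about them; we work with these accessors. -/

variable {V V₁ V₂ α : Type*}

namespace InTree.StarVertex

variable {T₁ : InTree V₁} {T₂ : InTree V₂}

def mk (v₁ : V₁) (v₂ : V₂) (h : T₁.height v₁ = T₂.height v₂) : StarVertex T₁ T₂ := ⟨(v₁, v₂), h⟩

def fst (x : StarVertex T₁ T₂) : V₁ := x.1.1

def snd (x : StarVertex T₁ T₂) : V₂ := x.1.2

theorem height_fst (x : StarVertex T₁ T₂) : T₁.height x.fst = T₂.height x.snd := x.2

@[simp] theorem fst_mk (v₁ : V₁) (v₂ : V₂) (h : T₁.height v₁ = T₂.height v₂) :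
    (mk (T₁ := T₁) (T₂ := T₂) v₁ v₂ h).fst = v₁ := rfl

@[simp] theorem snd_mk (v₁ : V₁) (v₂ : V₂) (h : T₁.height v₁ = T₂.height v₂) :
    (mk (T₁ := T₁) (T₂ := T₂) v₁ v₂ h).snd = v₂ := rfl

@[ext] theorem ext {x y : StarVertex T₁ T₂} (h₁ : x.fst = y.fst) (h₂ : x.snd = y.snd) : x = y :=
  Subtype.ext (Prod.ext h₁ h₂)

end InTree.StarVertex

namespace UnrollVertex

variable {f : α → α} {v : α}

def mk (u : α) (i : ℕ) (h : f^[i] u = v) : UnrollVertex f v := ⟨(u, i), h⟩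

def base (p : UnrollVertex f v) : α := p.1.1

def index (p : UnrollVertex f v) : ℕ := p.1.2

theorem iterate_index_base (p : UnrollVertex f v) : f^[p.index] p.base = v := p.2

@[simp] theorem base_mk (u : α) (i : ℕ) (h : f^[i] u = v) : (mk u i h).base = u := rfl

@[simp] theorem index_mk (u : α) (i : ℕ) (h : f^[i] u = v) : (mk u i h).index = i := rfl

@[ext] theorem ext {p q : UnrollVertex f v} (h₁ : p.base = q.base) (h₂ : p.index = q.index) :
    p = q :=
  Subtype.ext (Prod.ext h₁ h₂)

end UnrollVertex

namespace InTree.CutVertex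

variable {T : InTree V} {t : ℕ}

def mk (v : V) (hv : T.height v ≤ t) : CutVertex T t := ⟨v, hv⟩

def vertex (p : CutVertex T t) : V := p.1

theorem height_le (p : CutVertex T t) : T.height p.vertex ≤ t := p.2

@[simp] theorem vertex_mk (v : V) (hv : T.height v ≤ t) : (mk v hv).vertex = v := rfl

@[ext] theorem ext {p q : CutVertex T t} (h : p.vertex = q.vertex) : p = q := Subtype.ext h

theorem cutParent_iterate_vertex (k : ℕ) (p : CutVertex T t) :
    ((cutParent T t)^[k] p).vertex = T.parent^[k] p.vertex :=
  cutParent_iterate T t k p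

end InTree.CutVertex

end VertexAPI

namespace InTree

variable {V V₁ V₂ W W₁ W₂ W' : Type*}

theorem parent_iterate_eq_root_iff (T : InTree V) {v : V} {k : ℕ} :
    T.parent^[k] v = T.root ↔ T.height v ≤ k := by
  refine ⟨fun h => Nat.sInf_le h, fun h => ?_⟩
  rw [← Nat.sub_add_cancel h, iterate_add_apply, T.height_spec, iterate_fixed T.parent_root]

structure IsIso (T₁ : InTree V₁) (T₂ : InTree V₂) (e : V₁ ≃ V₂) : Prop where
  map_root : e T₁.root = T₂.root
  map_parent : Semiconj e T₁.parent T₂.parent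

section Iso

variable {T : InTree V} {T' : InTree W} {e : V ≃ W}

theorem IsIso.symm (he : IsIso T T' e) : IsIso T' T e.symm where
  map_root := by rw [← he.map_root, e.symm_apply_apply]
  map_parent w := e.injective (by rw [he.map_parent, e.apply_symm_apply, e.apply_symm_apply])

theorem IsIso.height_map (he : IsIso T T' e) (v : V) : T'.height (e v) = T.height v :=
  eq_of_forall_ge_iff fun k => by
    rw [← parent_iterate_eq_root_iff, ← parent_iterate_eq_root_iff, ← he.map_root,
      ← he.map_parent.iterate_right k v, e.injective.eq_iff]

end Iso

theorem exists_isIso_of_isomorphic {T₁ : InTree V₁} {T₂ : InTree V₂}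
    (h : Isomorphic T₁.Edge T₂.Edge) : ∃ e, IsIso T₁ T₂ e := by
  obtain ⟨e, he⟩ := h
  have hroot : e T₁.root = T₂.root := by
    by_contra hne
    simpa [Edge] using
      (he T₁.root (e.symm (T₂.parent (e T₁.root)))).2 (by simpa [Edge] using hne)
  refine ⟨e, hroot, fun v => ?_⟩
  by_cases hv : v = T₁.root
  · rw [hv, T₁.parent_root, hroot, T₂.parent_root]
  · exact ((he v (T₁.parent v)).1 ⟨hv, rfl⟩).2

section Subtree

variable {S : InTree W} {T : InTree V} {v : V} {L : W → V}

/-- `L` identifies `S` with the subtree of `T` hanging from `v`. -/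
structure IsSubtreeAt (S : InTree W) (T : InTree V) (v : V) (L : W → V) : Prop where
  injective : Injective L
  map_root : L S.root = v
  map_parent : ∀ p, p ≠ S.root → L (S.parent p) = T.parent (L p)
  height_map : ∀ p, T.height (L p) = S.height p + T.height v
  exists_eq : ∀ w, T.parent^[T.height w - T.height v] w = v → ∃ p, L p = w

theorem IsSubtreeAt.parent_iterate_height (hL : IsSubtreeAt S T v L) (p : W) :
    T.parent^[S.height p] (L p) = v := by
  induction hn : S.height p generalizing p with
  | zero => rw [S.height_eq_zero_iff.mp hn, iterate_zero_apply, hL.map_root]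
  | succ n ih =>
    have hp : p ≠ S.root := fun h => by simp [h] at hn
    rw [iterate_succ_apply, ← hL.map_parent p hp, ih]
    have := S.height_parent hp
    omega

variable {S' : InTree W'} {T' : InTree V₂} {L' : W' → V₂} {e : V ≃ V₂}

theorem IsSubtreeAt.exists_eq_apply (hL : IsSubtreeAt S T v L) {v' : V₂}
    (hL' : IsSubtreeAt S' T' v' L') (he : IsIso T T' e) (hv : e v = v') (p : W) :
    ∃ q, L' q = e (L p) :=
  hL'.exists_eq _ <| by
    rw [he.height_map, hL.height_map, ← hv, he.height_map, Nat.add_sub_cancel,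
      ← he.map_parent.iterate_right, hL.parent_iterate_height]

theorem IsIso.exists_isIso_of_isSubtreeAt (he : IsIso T T' e) (hL : IsSubtreeAt S T v L)
    (hL' : IsSubtreeAt S' T' (e v) L') : ∃ e' : W ≃ W', IsIso S S' e' := by
  choose F hF using hL.exists_eq_apply hL' he rfl
  choose G hG using hL'.exists_eq_apply hL he.symm (e.symm_apply_apply v)
  have hroot : F S.root = S'.root := hL'.injective (by rw [hF, hL.map_root, hL'.map_root])
  refine ⟨⟨F, G, fun p => hL.injective ?_, fun q => hL'.injective ?_⟩, hroot, fun p => ?_⟩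
  · rw [hG, hF, e.symm_apply_apply]
  · rw [hF, hG, e.apply_symm_apply]
  by_cases hp : p = S.root
  · simp only [Equiv.coe_fn_mk, hp, S.parent_root, hroot, S'.parent_root]
  have hFp : F p ≠ S'.root := fun h =>
    hp (hL.injective (e.injective (by rw [← hF, h, hL'.map_root, hL.map_root])))
  exact hL'.injective (by
    rw [Equiv.coe_fn_mk, hF, hL.map_parent p hp, he.map_parent, ← hF, hL'.map_parent _ hFp])

end Subtree

section Star

variable {T₁ : InTree V₁} {T₂ : InTree V₂}

@[simp] theorem star_root_fst : (T₁.star T₂).root.fst = T₁.root := rfl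

@[simp] theorem star_root_snd : (T₁.star T₂).root.snd = T₂.root := rfl

theorem star_parent_iterate_fst (k : ℕ) (x : StarVertex T₁ T₂) :
    ((T₁.star T₂).parent^[k] x).fst = T₁.parent^[k] x.fst :=
  congrArg Prod.fst (starParent_iterate T₁ T₂ k x)

theorem star_parent_iterate_snd (k : ℕ) (x : StarVertex T₁ T₂) :
    ((T₁.star T₂).parent^[k] x).snd = T₂.parent^[k] x.snd :=
  congrArg Prod.snd (starParent_iterate T₁ T₂ k x)

theorem star_parent_iterate_eq_iff {k : ℕ} {x y : StarVertex T₁ T₂} :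
    (T₁.star T₂).parent^[k] x = y ↔ T₁.parent^[k] x.fst = y.fst ∧ T₂.parent^[k] x.snd = y.snd := by
  rw [StarVertex.ext_iff, star_parent_iterate_fst, star_parent_iterate_snd]

theorem star_height (x : StarVertex T₁ T₂) : (T₁.star T₂).height x = T₁.height x.fst :=
  eq_of_forall_ge_iff fun k => by
    rw [← parent_iterate_eq_root_iff, star_parent_iterate_eq_iff, star_root_fst, star_root_snd,
      parent_iterate_eq_root_iff, parent_iterate_eq_root_iff, ← x.height_fst, and_self]

variable {S₁ : InTree W₁} {S₂ : InTree W₂} {v₁ : V₁} {v₂ : V₂} {L₁ : W₁ → V₁} {L₂ : W₂ → V₂}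

theorem IsSubtreeAt.star (hL₁ : IsSubtreeAt S₁ T₁ v₁ L₁) (hL₂ : IsSubtreeAt S₂ T₂ v₂ L₂)
    (hv : T₁.height v₁ = T₂.height v₂) :
    ∃ L, IsSubtreeAt (S₁.star S₂) (T₁.star T₂) (StarVertex.mk v₁ v₂ hv) L := by
  refine ⟨fun p => StarVertex.mk (L₁ p.fst) (L₂ p.snd)
      (by rw [hL₁.height_map, hL₂.height_map, p.height_fst, hv]),
    ⟨fun p q h => ?_, ?_, fun p hp => ?_, fun p => ?_, fun w hw => ?_⟩⟩
  · rw [StarVertex.ext_iff, StarVertex.fst_mk, StarVertex.fst_mk, StarVertex.snd_mk,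
      StarVertex.snd_mk] at h
    exact StarVertex.ext (hL₁.injective h.1) (hL₂.injective h.2)
  · exact StarVertex.ext hL₁.map_root hL₂.map_root
  · have hp₁ : p.fst ≠ S₁.root := fun h => hp (StarVertex.ext h
      (S₂.height_eq_zero_iff.mp (by rw [← p.height_fst, h, height_root])))
    have hp₂ : p.snd ≠ S₂.root := fun h => hp (StarVertex.ext
      (S₁.height_eq_zero_iff.mp (by rw [p.height_fst, h, height_root])) h)
    exact StarVertex.ext (hL₁.map_parent _ hp₁) (hL₂.map_parent _ hp₂)
  · rw [star_height, star_height, star_height, StarVertex.fst_mk, StarVertex.fst_mk,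
      hL₁.height_map]
  · rw [star_height, star_height, star_parent_iterate_eq_iff, StarVertex.fst_mk,
      StarVertex.snd_mk] at hw
    obtain ⟨p₁, hp₁⟩ := hL₁.exists_eq _ hw.1
    obtain ⟨p₂, hp₂⟩ := hL₂.exists_eq _ (by rw [← w.height_fst, ← hv]; exact hw.2)
    have h₁ := hL₁.height_map p₁
    have h₂ := hL₂.height_map p₂
    rw [hp₁] at h₁
    rw [hp₂, ← w.height_fst, ← hv] at h₂
    exact ⟨StarVertex.mk p₁ p₂ (by omega), StarVertex.ext hp₁ hp₂⟩

end Star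

section Unroll

variable {α : Type*} {f : α → α} {v : α}

@[simp] theorem unroll_root_base : (unroll f v).root.base = v := rfl

@[simp] theorem unroll_root_index : (unroll f v).root.index = 0 := rfl

theorem unroll_parent_of_index_ne_zero {p : UnrollVertex f v} (hp : p.index ≠ 0) :
    ((unroll f v).parent p).base = f p.base ∧ ((unroll f v).parent p).index = p.index - 1 := by
  rcases p with ⟨⟨u, _ | i⟩, h⟩
  · exact absurd rfl hp
  · exact ⟨rfl, rfl⟩

theorem unroll_parent_iterate {p : UnrollVertex f v} {n : ℕ} (hn : n ≤ p.index) :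
    ((unroll f v).parent^[n] p).base = f^[n] p.base ∧
      ((unroll f v).parent^[n] p).index = p.index - n := by
  induction n generalizing p with
  | zero => exact ⟨rfl, rfl⟩
  | succ n ih =>
    obtain ⟨h₁, h₂⟩ := unroll_parent_of_index_ne_zero (p := p) (by omega)
    rw [iterate_succ_apply, (ih (by omega)).1, (ih (by omega)).2, h₁, h₂, ← iterate_succ_apply]
    exact ⟨rfl, by omega⟩

theorem unroll_height (p : UnrollVertex f v) : (unroll f v).height p = p.index := by
  refine eq_of_forall_ge_iff fun k => ?_
  rw [← parent_iterate_eq_root_iff]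
  constructor
  · intro h
    by_contra hk
    have := (unroll_parent_iterate (p := p) (n := k) (by omega)).2
    rw [h, unroll_root_index] at this
    omega
  · intro hk
    rw [← Nat.sub_add_cancel hk, iterate_add_apply]
    have : (unroll f v).parent^[p.index] p = (unroll f v).root := unrollParent_iterate f v _ _ p.2
    rw [this, iterate_fixed (unroll f v).parent_root]

theorem exists_isSubtreeAt_unroll {v' : α} {s : ℕ} (hs : f^[s] v' = v) :
    ∃ L, IsSubtreeAt (unroll f v') (unroll f v) (UnrollVertex.mk v' s hs) L := by
  refine ⟨fun p => UnrollVertex.mk p.base (p.index + s)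
      (by rw [add_comm, iterate_add_apply, p.iterate_index_base, hs]),
    ⟨fun p q h => ?_, UnrollVertex.ext rfl (zero_add s), fun p hp => ?_, fun p => ?_,
      fun w hw => ?_⟩⟩
  · rw [UnrollVertex.ext_iff, UnrollVertex.base_mk, UnrollVertex.base_mk, UnrollVertex.index_mk,
      UnrollVertex.index_mk, Nat.add_right_cancel_iff] at h
    exact UnrollVertex.ext h.1 h.2
  · have hp0 : p.index ≠ 0 := fun h0 => hp (UnrollVertex.ext
      (by simpa [h0] using p.iterate_index_base) h0)
    obtain ⟨h₁, h₂⟩ := unroll_parent_of_index_ne_zero hp0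
    obtain ⟨h₁', h₂'⟩ := unroll_parent_of_index_ne_zero
      (p := UnrollVertex.mk (f := f) (v := v) p.base (p.index + s)
        (by rw [add_comm, iterate_add_apply, p.iterate_index_base, hs]))
      (by rw [UnrollVertex.index_mk]; omega)
    refine UnrollVertex.ext ?_ ?_
    · rw [h₁', UnrollVertex.base_mk, UnrollVertex.base_mk, h₁]
    · rw [h₂', UnrollVertex.index_mk, UnrollVertex.index_mk, h₂]
      omega
  · rw [unroll_height, unroll_height, unroll_height, UnrollVertex.index_mk, UnrollVertex.index_mk]
  · rw [unroll_height, unroll_height, UnrollVertex.index_mk] at hw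
    obtain ⟨h₁, h₂⟩ := unroll_parent_iterate (p := w) (Nat.sub_le w.index s)
    rw [hw, UnrollVertex.base_mk] at h₁
    rw [hw, UnrollVertex.index_mk] at h₂
    exact ⟨UnrollVertex.mk w.base (w.index - s) h₁.symm,
      UnrollVertex.ext rfl (by simp only [UnrollVertex.index_mk]; omega)⟩

end Unroll

section Shift

variable {α β γ : Type*} {f : α → α} {h : γ → γ} {g : β → β} {a a' : α} {x x' : γ} {b b' : β}
  {s : ℕ} {e : StarVertex (unroll f a) (unroll h x) ≃ UnrollVertex g b}

/-- The vertex `(a', x')` at height `s` has descendants at every depth, so its image does too,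
which forces the image to lie over a periodic point of `g`. -/
theorem IsIso.apply_mk_eq [Finite β] (ha' : a' ∈ periodicPts f) (hx' : x' ∈ periodicPts h)
    (hb' : b' ∈ periodicPts g) (hsa : f^[s] a' = a) (hsx : h^[s] x' = x) (hsb : g^[s] b' = b)
    (he : IsIso ((unroll f a).star (unroll h x)) (unroll g b) e)
    (hv : (unroll f a).height (UnrollVertex.mk a' s hsa) =
      (unroll h x).height (UnrollVertex.mk x' s hsx)) :
    e (StarVertex.mk (UnrollVertex.mk a' s hsa) (UnrollVertex.mk x' s hsx) hv) =
      UnrollVertex.mk b' s hsb := by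
  set v₀ := StarVertex.mk (UnrollVertex.mk a' s hsa) (UnrollVertex.mk x' s hsx) hv
  have hindex : (e v₀).index = s := by
    rw [← unroll_height, he.height_map, star_height, StarVertex.fst_mk, unroll_height,
      UnrollVertex.index_mk]
  obtain ⟨z₁, hz₁⟩ := mem_range_iterate_of_mem_periodicPts ha' (Nat.card β)
  obtain ⟨z₂, hz₂⟩ := mem_range_iterate_of_mem_periodicPts hx' (Nat.card β)
  set w := StarVertex.mk
    (UnrollVertex.mk (f := f) z₁ (s + Nat.card β) (by rw [iterate_add_apply, hz₁, hsa]))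
    (UnrollVertex.mk (f := h) z₂ (s + Nat.card β) (by rw [iterate_add_apply, hz₂, hsx]))
    (by rw [unroll_height, unroll_height]; rfl)
  have hw : (unroll g b).parent^[Nat.card β] (e w) = e v₀ := by
    rw [← he.map_parent.iterate_right]
    refine congrArg e (star_parent_iterate_eq_iff.mpr ⟨?_, ?_⟩)
    · obtain ⟨h₁, h₂⟩ := unroll_parent_iterate (f := f) (v := a) (p := w.fst) (n := Nat.card β)
        (by simp [w])
      exact UnrollVertex.ext (by simpa [w, v₀, hz₁] using h₁) (by simpa [w, v₀] using h₂)
    · obtain ⟨h₁, h₂⟩ := unroll_parent_iterate (f := h) (v := x) (p := w.snd) (n := Nat.card β)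
        (by simp [w])
      exact UnrollVertex.ext (by simpa [w, v₀, hz₂] using h₁) (by simpa [w, v₀] using h₂)
  have hwindex : (e w).index = s + Nat.card β := by
    rw [← unroll_height, he.height_map, star_height, StarVertex.fst_mk, unroll_height,
      UnrollVertex.index_mk]
  have hbase := (unroll_parent_iterate (p := e w) (n := Nat.card β) (by omega)).1
  rw [hw] at hbase
  have hper : (e v₀).base ∈ periodicPts g :=
    mem_periodicPts_of_mem_range_iterate le_rfl ⟨_, hbase.symm⟩
  refine UnrollVertex.ext (eq_of_iterate_eq_of_mem_periodicPts hper hb' (n := s) ?_) hindex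
  rw [UnrollVertex.base_mk, hsb, ← hindex]
  exact (e v₀).iterate_index_base

theorem IsIso.exists_isIso_star_unroll [Finite β] (ha' : a' ∈ periodicPts f)
    (hx' : x' ∈ periodicPts h) (hb' : b' ∈ periodicPts g) (hsa : f^[s] a' = a)
    (hsx : h^[s] x' = x) (hsb : g^[s] b' = b)
    (he : IsIso ((unroll f a).star (unroll h x)) (unroll g b) e) :
    ∃ e', IsIso ((unroll f a').star (unroll h x')) (unroll g b') e' := by
  obtain ⟨L₁, hL₁⟩ := exists_isSubtreeAt_unroll hsa
  obtain ⟨L₂, hL₂⟩ := exists_isSubtreeAt_unroll hsx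
  obtain ⟨L, hL⟩ := exists_isSubtreeAt_unroll hsb
  obtain ⟨M, hM⟩ := hL₁.star hL₂ (by rw [unroll_height, unroll_height]; rfl)
  exact he.exists_isIso_of_isSubtreeAt hM (by rwa [he.apply_mk_eq ha' hx' hb' hsa hsx hsb])

end Shift

section Cut

noncomputable abbrev cutLF (T : InTree V) (t : ℕ) [Finite (CutVertex T t)] : LevelledForest where
  V := CutVertex T t
  lev p := T.height p.vertex
  par := cutParent T t
  lev_par p hp := (T.height_parent (v := p.vertex) fun h => hp (by rw [h, height_root])).symm
  par_eq_self p hp := CutVertex.ext (by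
    rw [← iterate_one (cutParent T t), CutVertex.cutParent_iterate_vertex, iterate_one,
      T.height_eq_zero_iff.mp hp, T.parent_root])

instance {α : Type*} [Finite α] {f : α → α} {v : α} {t : ℕ} :
    Finite (CutVertex (unroll f v) t) := by
  refine Finite.of_injective (fun p : CutVertex (unroll f v) t =>
    (p.vertex.base, (⟨p.vertex.index, ?_⟩ : Fin (t + 1)))) fun p q h => ?_
  · have := p.height_le
    rw [unroll_height] at this
    omega
  · simp only [Prod.mk.injEq, Fin.mk.injEq] at h
    exact CutVertex.ext (UnrollVertex.ext h.1 h.2)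

instance {T₁ : InTree V₁} {T₂ : InTree V₂} {t : ℕ} [Finite (CutVertex T₁ t)]
    [Finite (CutVertex T₂ t)] : Finite (CutVertex (T₁.star T₂) t) := by
  refine Finite.of_injective (fun p : CutVertex (T₁.star T₂) t =>
    (CutVertex.mk (T := T₁) (t := t) p.vertex.fst ?_,
      CutVertex.mk (T := T₂) (t := t) p.vertex.snd ?_)) fun p q h => ?_
  · rw [← star_height]
    exact p.height_le
  · rw [← p.vertex.height_fst, ← star_height]
    exact p.height_le
  · simp only [Prod.mk.injEq, CutVertex.ext_iff, CutVertex.vertex_mk] at h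
    exact CutVertex.ext (StarVertex.ext h.1 h.2)

variable {T : InTree V} {T' : InTree V₂} {e : V ≃ V₂} {t : ℕ}

theorem IsIso.exists_isIso_cutLF (he : IsIso T T' e) (t : ℕ) [Finite (CutVertex T t)]
    [Finite (CutVertex T' t)] : ∃ e', (cutLF T t).IsIso (cutLF T' t) e' :=
  ⟨(e.subtypeEquiv fun v => by rw [he.height_map] : CutVertex T t ≃ CutVertex T' t),
    fun p => he.height_map p.vertex, fun p => CutVertex.ext (he.map_parent p.vertex)⟩

theorem exists_isIso_cutLF_star (T₁ : InTree V₁) (T₂ : InTree V₂) (t : ℕ)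
    [Finite (CutVertex T₁ t)] [Finite (CutVertex T₂ t)] :
    ∃ e, (cutLF (T₁.star T₂) t).IsIso ((cutLF T₁ t).prod (cutLF T₂ t)) e := by
  refine ⟨⟨fun p => ⟨(CutVertex.mk p.vertex.fst ?_, CutVertex.mk p.vertex.snd ?_),
      p.vertex.height_fst⟩,
    fun q => CutVertex.mk (StarVertex.mk q.1.1.vertex q.1.2.vertex q.2) ?_,
    fun _ => rfl, fun _ => rfl⟩, fun p => (star_height p.vertex).symm, fun _ => rfl⟩
  · rw [← star_height]
    exact p.height_le
  · rw [← p.vertex.height_fst, ← star_height]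
    exact p.height_le
  · rw [star_height, StarVertex.fst_mk]
    exact q.1.1.height_le

section Unroll

variable {α : Type*} [Finite α] {f : α → α} {v : α}

theorem cutLF_unroll_lev (p : (cutLF (unroll f v) t).V) :
    (cutLF (unroll f v) t).lev p = p.vertex.index :=
  unroll_height _

theorem cutLF_unroll_par_iterate {p : (cutLF (unroll f v) t).V} {n : ℕ} (hn : n ≤ p.vertex.index) :
    ((cutLF (unroll f v) t).par^[n] p).vertex.base = f^[n] p.vertex.base ∧
      ((cutLF (unroll f v) t).par^[n] p).vertex.index = p.vertex.index - n := by
  rw [CutVertex.cutParent_iterate_vertex]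
  exact unroll_parent_iterate hn

theorem hasDescendant_cutLF_unroll_iff {p : (cutLF (unroll f v) t).V} {n : ℕ}
    (hp : p.vertex.index + n ≤ t) :
    (cutLF (unroll f v) t).HasDescendant n p ↔ p.vertex.base ∈ range f^[n] := by
  constructor
  · rintro ⟨s, hlev, hpar⟩
    rw [cutLF_unroll_lev, cutLF_unroll_lev] at hlev
    exact ⟨s.vertex.base, by rw [← hpar, (cutLF_unroll_par_iterate (by omega)).1]⟩
  · rintro ⟨z, hz⟩
    have hz' : f^[p.vertex.index + n] z = v := by
      rw [iterate_add_apply, hz, p.vertex.iterate_index_base]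
    have hle : (unroll f v).height (UnrollVertex.mk z _ hz') ≤ t := by rwa [unroll_height]
    obtain ⟨h₁, h₂⟩ := cutLF_unroll_par_iterate (p := CutVertex.mk _ hle) (n := n) (by simp)
    refine ⟨CutVertex.mk _ hle, by rw [cutLF_unroll_lev, cutLF_unroll_lev]; rfl,
      CutVertex.ext (UnrollVertex.ext ?_ ?_)⟩
    · simpa [hz] using h₁
    · simpa using h₂

theorem exists_isIso_cutLF_of_isIso_star {β γ δ : Type*} [Finite β] [Finite γ] [Finite δ]
    {g : β → β} {h : γ → γ} {h' : δ → δ} {b : β} {x : γ} {y : δ}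
    {e₁ : StarVertex (unroll f v) (unroll h x) ≃ UnrollVertex g b}
    {e₂ : StarVertex (unroll f v) (unroll h' y) ≃ UnrollVertex g b} (hv : v ∈ periodicPts f)
    (t : ℕ) (he₁ : IsIso ((unroll f v).star (unroll h x)) (unroll g b) e₁)
    (he₂ : IsIso ((unroll f v).star (unroll h' y)) (unroll g b) e₂) :
    ∃ e, (cutLF (unroll h x) t).IsIso (cutLF (unroll h' y) t) e := by
  obtain ⟨c₁, hc₁⟩ := exists_isIso_cutLF_star (unroll f v) (unroll h x) t
  obtain ⟨c₂, hc₂⟩ := exists_isIso_cutLF_star (unroll f v) (unroll h' y) t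
  obtain ⟨d₁, hd₁⟩ := he₁.exists_isIso_cutLF t
  obtain ⟨d₂, hd₂⟩ := he₂.exists_isIso_cutLF t
  -- a preimage of `v` under `f^[t]` is a vertex of full depth in the cut of `unroll f v`
  obtain ⟨z, hz⟩ := mem_range_iterate_of_mem_periodicPts hv t
  exact LevelledForest.exists_isIso_of_isIso_prod
    (a := CutVertex.mk (UnrollVertex.mk z t hz) (by rw [unroll_height]; rfl)) (unroll_height _)
    (fun p => CutVertex.height_le p) (fun p => CutVertex.height_le p)
    ((hc₁.symm.trans hd₁).trans (hc₂.symm.trans hd₂).symm)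

end Unroll

end Cut

end InTree

section Roll

open InTree LevelledForest

variable {γ δ : Type*} [Finite γ] [Finite δ] {h : γ → γ} {h' : δ → δ} {x : γ} {y : δ}
  {N t : ℕ} {e : (cutLF (unroll h x) t).V ≃ (cutLF (unroll h' y) t).V}

theorem cutLF_unroll_index_apply (he : (cutLF (unroll h x) t).IsIso (cutLF (unroll h' y) t) e)
    (p : (cutLF (unroll h x) t).V) : (e p).vertex.index = p.vertex.index := by
  rw [← cutLF_unroll_lev, he.lev_map, cutLF_unroll_lev]

/-- Periodicity of the base point is visible in a deep enough cut: a point is periodic iff it has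
preimages under `h^[N]`, i.e. iff its vertex has a descendant `N` levels further up. -/
theorem mem_periodicPts_base_apply_iff (hγ : Nat.card γ ≤ N) (hδ : Nat.card δ ≤ N)
    (he : (cutLF (unroll h x) t).IsIso (cutLF (unroll h' y) t) e) {p : (cutLF (unroll h x) t).V}
    (hp : p.vertex.index + N ≤ t) :
    p.vertex.base ∈ periodicPts h ↔ (e p).vertex.base ∈ periodicPts h' := by
  rw [mem_periodicPts_iff_mem_range_iterate hγ, mem_periodicPts_iff_mem_range_iterate hδ,
    ← hasDescendant_cutLF_unroll_iff hp,
    ← hasDescendant_cutLF_unroll_iff (by rwa [cutLF_unroll_index_apply he]), he.hasDescendant_iff]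

theorem preperiod_base_apply (hx : x ∈ periodicPts h) (hγ : Nat.card γ ≤ N)
    (hδ : Nat.card δ ≤ N) (he : (cutLF (unroll h x) t).IsIso (cutLF (unroll h' y) t) e)
    {p : (cutLF (unroll h x) t).V} (hp : p.vertex.index + N ≤ t) :
    preperiod h' (e p).vertex.base = preperiod h p.vertex.base := by
  refine (preperiod_eq_of_iff (i := p.vertex.index) ?_ fun m hm => ?_).symm
  · exact iterate_mem_periodicPts_iff.mp (by rwa [p.vertex.iterate_index_base])
  · obtain ⟨h₁, h₂⟩ := cutLF_unroll_par_iterate (p := p) hm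
    obtain ⟨h₁', -⟩ :=
      cutLF_unroll_par_iterate (p := e p) (n := m) (by rwa [cutLF_unroll_index_apply he])
    rw [← h₁, ← h₁', ← he.map_par.iterate_right]
    exact mem_periodicPts_base_apply_iff hγ hδ he (by omega)

theorem index_eq_bandIndex_apply_iff (hh : FGConnected h) (hh' : FGConnected h')
    (hx : x ∈ periodicPts h) (hy : y ∈ periodicPts h')
    (hc : minimalPeriod h x = minimalPeriod h' y) (hγ : Nat.card γ ≤ N) (hδ : Nat.card δ ≤ N)
    (ht : 2 * N + minimalPeriod h x ≤ t)
    (he : (cutLF (unroll h x) t).IsIso (cutLF (unroll h' y) t) e) (p : (cutLF (unroll h x) t).V) :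
    p.vertex.index = bandIndex h x p.vertex.base ↔
      (e p).vertex.index = bandIndex h' y (e p).vertex.base := by
  have hy' := (e p).vertex.iterate_index_base
  rw [cutLF_unroll_index_apply he] at hy' ⊢
  rw [eq_bandIndex_iff hh hx p.vertex.iterate_index_base, eq_bandIndex_iff hh' hy hy', ← hc]
  by_cases hi : p.vertex.index + N ≤ t
  · rw [preperiod_base_apply hx hγ hδ he hi]
  · have := preperiod_le_card (f := h) p.vertex.base
    have := preperiod_le_card (f := h') (e p).vertex.base
    omega

variable (h x t) in
noncomputable def bandVertex (hh : FGConnected h) (hx : x ∈ periodicPts h)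
    (ht : Nat.card γ + minimalPeriod h x ≤ t) (w : γ) : (cutLF (unroll h x) t).V :=
  CutVertex.mk (UnrollVertex.mk w (bandIndex h x w) (bandIndex_spec hh hx w).2.2) <| by
    have := preperiod_le_card (f := h) w
    have := (bandIndex_spec hh hx w).2.1
    rw [unroll_height, UnrollVertex.index_mk]
    omega

@[simp] theorem bandVertex_base (hh : FGConnected h) (hx : x ∈ periodicPts h)
    (ht : Nat.card γ + minimalPeriod h x ≤ t) (w : γ) :
    (bandVertex h x t hh hx ht w).vertex.base = w := rfl

@[simp] theorem bandVertex_index (hh : FGConnected h) (hx : x ∈ periodicPts h)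
    (ht : Nat.card γ + minimalPeriod h x ≤ t) (w : γ) :
    (bandVertex h x t hh hx ht w).vertex.index = bandIndex h x w := rfl

noncomputable def bandEquiv (hh : FGConnected h) (hx : x ∈ periodicPts h)
    (ht : Nat.card γ + minimalPeriod h x ≤ t) :
    γ ≃ {p : (cutLF (unroll h x) t).V // p.vertex.index = bandIndex h x p.vertex.base} where
  toFun w := ⟨bandVertex h x t hh hx ht w, rfl⟩
  invFun p := p.1.vertex.base
  left_inv _ := rfl
  right_inv p := Subtype.ext (CutVertex.ext (UnrollVertex.ext rfl p.2.symm))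

theorem bandVertex_apply_eq_par (hh : FGConnected h) (hx : x ∈ periodicPts h)
    (ht : Nat.card γ + minimalPeriod h x ≤ t) {w : γ} (hw : bandIndex h x w ≠ 1) :
    bandVertex h x t hh hx ht (h w) = (cutLF (unroll h x) t).par (bandVertex h x t hh hx ht w) := by
  obtain ⟨hB₁, hB₂, hB⟩ := bandIndex_spec hh hx w
  obtain ⟨h₁, h₂⟩ := cutLF_unroll_par_iterate (p := bandVertex h x t hh hx ht w) (n := 1)
    (by rw [bandVertex_index]; omega)
  simp only [iterate_one] at h₁ h₂
  refine CutVertex.ext (UnrollVertex.ext (by rw [h₁, bandVertex_base, bandVertex_base]) ?_)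
  rw [h₂, bandVertex_index, bandVertex_index, eq_comm, eq_bandIndex_iff hh hx
    (by rw [← iterate_succ_apply, Nat.succ_eq_add_one, Nat.sub_add_cancel (by omega), hB]),
    preperiod_apply]
  omega

theorem base_apply_eq_of_base_eq (hx : x ∈ periodicPts h) (hy : y ∈ periodicPts h')
    (hc : minimalPeriod h x = minimalPeriod h' y) (hγ : Nat.card γ ≤ N) (hδ : Nat.card δ ≤ N)
    (he : (cutLF (unroll h x) t).IsIso (cutLF (unroll h' y) t) e) {p : (cutLF (unroll h x) t).V}
    (hp : p.vertex.base = x) (hi : p.vertex.index + N ≤ t) : (e p).vertex.base = y := by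
  have hper := (mem_periodicPts_base_apply_iff hγ hδ he hi).mp (by rwa [hp])
  have hq := (e p).vertex.iterate_index_base
  rw [cutLF_unroll_index_apply he] at hq
  have hpx := p.vertex.iterate_index_base
  rw [hp] at hpx
  have hdvd : minimalPeriod h' y ∣ p.vertex.index := hc ▸ IsPeriodicPt.minimalPeriod_dvd hpx
  exact eq_of_iterate_eq_of_mem_periodicPts hper hy
    (by rw [hq, (isPeriodicPt_iff_minimalPeriod_dvd.mpr hdvd).eq])

theorem base_apply_bandVertex_apply (hh : FGConnected h)
    (hx : x ∈ periodicPts h) (hy : y ∈ periodicPts h')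
    (hc : minimalPeriod h x = minimalPeriod h' y) (hγ : Nat.card γ ≤ N) (hδ : Nat.card δ ≤ N)
    (ht : 2 * N + minimalPeriod h x ≤ t)
    (he : (cutLF (unroll h x) t).IsIso (cutLF (unroll h' y) t) e) (w : γ) :
    (e (bandVertex h x t hh hx (by omega) (h w))).vertex.base =
      h' (e (bandVertex h x t hh hx (by omega) w)).vertex.base := by
  by_cases hw : bandIndex h x w = 1
  · -- then `h w = x`, and both sides lie over `y`
    have hhw : h w = x := by simpa [hw] using (bandIndex_spec hh hx w).2.2
    have hv := (e (bandVertex h x t hh hx (by omega) w)).vertex.iterate_index_base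
    rw [cutLF_unroll_index_apply he, bandVertex_index, hw, iterate_one] at hv
    have := (bandIndex_spec hh hx (h w)).2.1
    have := preperiod_le_card (f := h) (h w)
    rw [hv, base_apply_eq_of_base_eq hx hy hc hγ hδ he (by rw [bandVertex_base, hhw])
      (by rw [bandVertex_index]; omega)]
  · have hidx : 1 ≤ (e (bandVertex h x t hh hx (by omega) w)).vertex.index := by
      rw [cutLF_unroll_index_apply he, bandVertex_index]
      have := (bandIndex_spec hh hx w).1
      omega
    rw [bandVertex_apply_eq_par hh hx _ hw, he.map_par, ← iterate_one (cutLF (unroll h' y) t).par,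
      (cutLF_unroll_par_iterate hidx).1, iterate_one]

theorem FGIso.of_isIso_cutLF_unroll (hh : FGConnected h) (hh' : FGConnected h')
    (hx : x ∈ periodicPts h) (hy : y ∈ periodicPts h')
    (hc : minimalPeriod h x = minimalPeriod h' y)
    (ht : 2 * (Nat.card γ + Nat.card δ) + minimalPeriod h x ≤ t)
    (he : (cutLF (unroll h x) t).IsIso (cutLF (unroll h' y) t) e) : FGIso h h' := by
  have hγ : Nat.card γ ≤ Nat.card γ + Nat.card δ := Nat.le_add_right _ _
  have hδ : Nat.card δ ≤ Nat.card γ + Nat.card δ := Nat.le_add_left _ _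
  refine ⟨(bandEquiv hh hx (by omega)).trans ((e.subtypeEquiv
      (index_eq_bandIndex_apply_iff hh hh' hx hy hc hγ hδ ht he)).trans
      (bandEquiv hh' hy (by omega)).symm), fun w => ?_⟩
  exact base_apply_bandVertex_apply hh hx hy hc hγ hδ ht he w

end Roll

end DDS

theorem roll_shift_iso_general {α β γ δ : Type*} [Fintype α] [Fintype β] [Fintype γ] [Fintype δ]
    (f : α → α) (g : β → β) (h : γ → γ) (h' : δ → δ)
    (hhc : FGConnected h) (hh'c : FGConnected h')
    (hYX : periodicCount h' = periodicCount h)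
    (a : α) (x : γ) (y : δ) (b : β)
    (ha : ∃ n, 1 ≤ n ∧ f^[n] a = a) (hx : ∃ n, 1 ≤ n ∧ h^[n] x = x)
    (hy : ∃ n, 1 ≤ n ∧ h'^[n] y = y) (hb : ∃ n, 1 ≤ n ∧ g^[n] b = b)
    (h1 : Isomorphic ((unroll f a).star (unroll h x)).Edge (unroll g b).Edge)
    (h2 : ∃ k : ℕ, Isomorphic ((unroll f (f^[k] a)).star (unroll h' y)).Edge
        (unroll g (g^[k] b)).Edge) :
    FGIso h h' := by
  obtain ⟨k, h2⟩ := h2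
  obtain ⟨y₀, hy₀, rfl⟩ := ((Function.bijOn_periodicPts (f := h')).iterate k).surjOn hy
  obtain ⟨e₁, he₁⟩ := exists_isIso_of_isomorphic h1
  obtain ⟨e₂, he₂⟩ := exists_isIso_of_isomorphic h2
  obtain ⟨e₂', he₂'⟩ := he₂.exists_isIso_star_unroll ha hy₀ hb rfl rfl rfl
  obtain ⟨e, he⟩ := exists_isIso_cutLF_of_isIso_star ha
    (2 * (Nat.card γ + Nat.card δ) + Function.minimalPeriod h x) he₁ he₂'
  refine FGIso.of_isIso_cutLF_unroll hhc hh'c hx hy₀ ?_ le_rfl he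
  rw [← hhc.periodicCount_eq_minimalPeriod hx, ← hYX, hh'c.periodicCount_eq_minimalPeriod hy₀]

/-- If `U(f,a) ⋆ U(h,x) ≅ U(g,b)` and, for some `k`, `U(f, f^[k] a) ⋆ U(h',y) ≅ U(g, g^[k] b)`,
where `f, g, h, h'` are connected FGs on finite nonempty types with
`lcm(c_A, c_X) = c_B` and `c_Y = c_X`, then the functional graphs `h` and `h'` are
isomorphic. -/
theorem roll_shift_iso {α β γ δ : Type*} [Fintype α] [Fintype β] [Fintype γ] [Fintype δ]
    [Nonempty α] [Nonempty β] [Nonempty γ] [Nonempty δ]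
    (f : α → α) (g : β → β) (h : γ → γ) (h' : δ → δ)
    (hfc : FGConnected f) (hgc : FGConnected g) (hhc : FGConnected h) (hh'c : FGConnected h')
    (hlcm : Nat.lcm (periodicCount f) (periodicCount h) = periodicCount g)
    (hYX : periodicCount h' = periodicCount h)
    (a : α) (x : γ) (y : δ) (b : β)
    (ha : ∃ n, 1 ≤ n ∧ f^[n] a = a) (hx : ∃ n, 1 ≤ n ∧ h^[n] x = x)
    (hy : ∃ n, 1 ≤ n ∧ h'^[n] y = y) (hb : ∃ n, 1 ≤ n ∧ g^[n] b = b)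
    (h1 : Isomorphic ((unroll f a).star (unroll h x)).Edge (unroll g b).Edge)
    (h2 : ∃ k : ℕ, Isomorphic ((unroll f (f^[k] a)).star (unroll h' y)).Edge
        (unroll g (g^[k] b)).Edge) :
    FGIso h h' :=
  roll_shift_iso_general f g h h' hhc hh'c hYX a x y b ha hx hy hb h1 h2
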